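/- arXiv:2505.23350 — 2 statements merged into one kernel-verified Lean document; each statement's English description precedes it below -/
import Mathlib

section
/- Maclaurin's inequality for nonnegative reals: if $\lambda_1, \ldots, \lambda_n \ge 0$ and $1 \le i < j \le n$, then $\left(\frac{e_j(\lambda)}{\binom{n}{j}}\right)^{1/j} \le \left(\frac{e_i(\lambda)}{\binom{n}{i}}\right)^{1/i}$, where $e_k$ is the $k$-th elementary symmetric polynomial. -/
/-- The `k`-th elementary symmetric polynomial of `lam 0, ..., lam (n-1)`. -/
def esymm (n k : ℕ) (lam : Fin n → ℝ) : ℝ :=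
  ∑ t ∈ Finset.powersetCard k (Finset.univ : Finset (Fin n)), ∏ i ∈ t, lam i

open Polynomial Finset

lemma mac_exists_fn (t : Multiset ℝ) (j : ℕ) (h : Multiset.card t = j) :
    ∃ g : Fin j → ℝ, Multiset.map g Finset.univ.val = t := by
  obtain ⟨l, rfl⟩ : ∃ l : List ℝ, (l : Multiset ℝ) = t := ⟨t.toList, t.coe_toList⟩
  have hl : l.length = j := by simpa using h
  subst hl
  exact ⟨l.get, by rw [Fin.univ_val_map, List.ofFn_get]⟩


lemma mesymm_nonneg (s : Multiset ℝ) (h : ∀ x ∈ s, 0 ≤ x) (k : ℕ) : 0 ≤ s.esymm k := by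
  refine Multiset.sum_nonneg ?_
  intro x hx
  obtain ⟨u, hu, rfl⟩ := Multiset.mem_map.1 hx
  exact Multiset.prod_nonneg fun y hy =>
    h y (Multiset.mem_of_le (Multiset.mem_powersetCard.1 hu).1 hy)

lemma mac_step (s : Multiset ℝ) (h0 : ∀ x ∈ s, 0 ≤ x) (hn : s ≠ 0) :
    ∃ t : Multiset ℝ, (∀ x ∈ t, 0 ≤ x) ∧ Multiset.card t + 1 = Multiset.card s ∧
      ∀ k ≤ Multiset.card t,
        (Multiset.card s : ℝ) * t.esymm k = ((Multiset.card s : ℝ) - k) * s.esymm k := by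
  set n := Multiset.card s with hcard
  have hn1 : 1 ≤ n := by
    rw [hcard, Nat.one_le_iff_ne_zero]
    simpa using hn
  set P : ℝ[X] := (s.map fun r => X + C r).prod with hP
  have hPeq : P = ((s.map Neg.neg).map fun a => X - C a).prod := by
    rw [hP, Multiset.map_map]
    congr 1
    refine Multiset.map_congr rfl fun x _ => ?_
    simp [sub_neg_eq_add]
  have hProots : P.roots = s.map Neg.neg := by
    rw [hPeq]; exact roots_multiset_prod_X_sub_C _
  have hPmonic : P.Monic :=
    monic_multiset_prod_of_monic s _ fun r _ => monic_X_add_C r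
  have hPdeg : P.natDegree = n := by
    rw [hPeq, natDegree_multiset_prod_X_sub_C_eq_card, Multiset.card_map, hcard]
  -- derivative facts
  have hd1 : n ≤ Multiset.card (derivative P).roots + 1 := by
    have := P.card_roots_le_derivative
    rwa [hProots, Multiset.card_map, ← hcard] at this
  have hd3 : (derivative P).natDegree ≤ n - 1 := by
    have := natDegree_derivative_le P
    rwa [hPdeg] at this
  have hd2 : Multiset.card (derivative P).roots ≤ (derivative P).natDegree := card_roots' _
  have hrootscard : Multiset.card (derivative P).roots = (derivative P).natDegree := by omega
  have hPdeg' : (derivative P).natDegree = n - 1 := by omega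
  -- leading coefficient of derivative
  have hlead : (derivative P).leadingCoeff = (n : ℝ) := by
    have h1 : P.coeff n = 1 := by rw [← hPdeg]; exact hPmonic.coeff_natDegree
    rw [leadingCoeff, hPdeg', coeff_derivative, Nat.sub_add_cancel hn1, h1, one_mul,
      Nat.cast_sub hn1]
    push_cast
    ring
  -- coefficients of P are nonneg
  have hPcoeff : ∀ m, 0 ≤ P.coeff m := by
    intro m
    rcases le_or_gt m n with hm | hm
    · rw [hP, Multiset.prod_X_add_C_coeff s (hcard ▸ hm)]
      exact mesymm_nonneg s h0 _
    · rw [coeff_eq_zero_of_natDegree_lt (hPdeg ▸ hm)]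
  have hP'coeff : ∀ m, 0 ≤ (derivative P).coeff m := by
    intro m
    rw [coeff_derivative]
    exact mul_nonneg (hPcoeff _) (by positivity)
  -- roots of derivative are nonpositive
  have hP'ne : derivative P ≠ 0 := by
    intro h
    rw [h, leadingCoeff_zero] at hlead
    exact_mod_cast absurd hlead.symm (by positivity)
  have hrootsle : ∀ r ∈ (derivative P).roots, r ≤ 0 := by
    intro r hr
    by_contra hrpos
    push_neg at hrpos
    have heval : (derivative P).eval r = 0 := (mem_roots hP'ne).1 hr
    have hsum : (derivative P).eval r =
        ∑ m ∈ Finset.range ((derivative P).natDegree + 1), (derivative P).coeff m * r ^ m :=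
      eval_eq_sum_range r
    have hterm : (0:ℝ) < (derivative P).coeff (n-1) * r ^ (n-1) := by
      have : (derivative P).coeff (n-1) = (n : ℝ) := by
        rw [← hPdeg', ← leadingCoeff, hlead]
      rw [this]
      exact mul_pos (by exact_mod_cast hn1) (pow_pos hrpos _)
    have hge : (derivative P).coeff (n-1) * r ^ (n-1) ≤ (derivative P).eval r := by
      rw [hsum]
      refine Finset.single_le_sum (f := fun m => (derivative P).coeff m * r ^ m)
        (fun m _ => mul_nonneg (hP'coeff m) (pow_nonneg hrpos.le m)) ?_
      simp [hPdeg']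
    linarith [heval ▸ hge]
  -- factor the derivative
  have hfac : derivative P =
      C (n : ℝ) * ((derivative P).roots.map fun a => X - C a).prod := by
    conv_lhs => rw [← C_leadingCoeff_mul_prod_multiset_X_sub_C hrootscard, hlead]
  refine ⟨(derivative P).roots.map Neg.neg, ?_, ?_, ?_⟩
  · intro x hx
    obtain ⟨a, ha, rfl⟩ := Multiset.mem_map.1 hx
    simpa using hrootsle a ha
  · rw [Multiset.card_map, hrootscard, hPdeg']; omega
  · intro k hk
    rw [Multiset.card_map, hrootscard, hPdeg'] at hk
    set t : Multiset ℝ := (derivative P).roots.map Neg.neg with ht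
    have htcard : Multiset.card t = n - 1 := by
      rw [ht, Multiset.card_map, hrootscard, hPdeg']
    have hfac' : derivative P = C (n : ℝ) * (t.map fun b => X + C b).prod := by
      rw [hfac, ht, Multiset.map_map]
      congr 2
      refine (Multiset.map_congr rfl fun x _ => ?_)
      simp [sub_eq_add_neg]
    -- compute coeff at n-1-k two ways
    have hidx1 : n - 1 - k + 1 = n - k := by omega
    have e1 : (derivative P).coeff (n-1-k) = s.esymm k * ((n : ℝ) - k) := by
      rw [coeff_derivative, hidx1, hP,
        Multiset.prod_X_add_C_coeff s (by omega : n - k ≤ Multiset.card s), ← hcard,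
        (show n - (n - k) = k by omega), Nat.sub_sub,
        Nat.cast_sub (show 1 + k ≤ n by omega)]
      push_cast
      ring
    have e2 : (derivative P).coeff (n-1-k) = (n : ℝ) * t.esymm k := by
      rw [hfac', coeff_C_mul, Multiset.prod_X_add_C_coeff t (by omega : n - 1 - k ≤ Multiset.card t), htcard]
      congr 2
      omega
    rw [← e2, e1]; ring


lemma mac_reduce (d : ℕ) : ∀ (s : Multiset ℝ) (j : ℕ), (∀ x ∈ s, 0 ≤ x) →
    Multiset.card s = j + d →
    ∃ t : Multiset ℝ, (∀ x ∈ t, 0 ≤ x) ∧ Multiset.card t = j ∧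
      ∀ k ≤ j, ((Multiset.card s).choose k : ℝ) * t.esymm k
        = (j.choose k : ℝ) * s.esymm k := by
  induction d with
  | zero =>
    intro s j h0 hc
    exact ⟨s, h0, by omega, fun k _ => by rw [hc, Nat.add_zero]⟩
  | succ d ih =>
    intro s j h0 hc
    have hs0 : s ≠ 0 := by
      intro h; rw [h] at hc; simp at hc
    obtain ⟨t', ht'0, ht'c, ht'e⟩ := mac_step s h0 hs0
    obtain ⟨t, ht0, htc, hte⟩ := ih t' j ht'0 (by omega)
    refine ⟨t, ht0, htc, fun k hk => ?_⟩
    have hkm : k ≤ Multiset.card t' := by omega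
    have hA := ht'e k hkm
    have hB := hte k hk
    set n := Multiset.card s with hn
    set m := Multiset.card t' with hm
    have hnm : n = m + 1 := by omega
    have hchoose : (m.choose k : ℝ) * n = (n.choose k : ℝ) * ((n : ℝ) - k) := by
      have h1 : m.choose k * (m+1) = (m+1).choose k * (m+1-k) := Nat.choose_mul_succ_eq m k
      have h2 : ((m+1-k : ℕ) : ℝ) = (n : ℝ) - k := by
        rw [Nat.cast_sub (by omega)]
        push_cast [hnm]; ring
      calc (m.choose k : ℝ) * n = ((m.choose k * (m+1) : ℕ) : ℝ) := by push_cast [hnm]; ring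
        _ = (((m+1).choose k * (m+1-k) : ℕ) : ℝ) := by rw [h1]
        _ = (n.choose k : ℝ) * ((n:ℝ) - k) := by
            push_cast [← hnm, Nat.cast_sub (show k ≤ n by omega)]; ring
    have hnk : (0:ℝ) < (n : ℝ) - k := by
      have : k < n := by omega
      have := Nat.cast_lt (α := ℝ) |>.2 this
      linarith
    refine mul_left_cancel₀ (ne_of_gt hnk) ?_
    linear_combination (n:ℝ) * hB + (j.choose k : ℝ) * hA - t.esymm k * hchoose

lemma mac_card_filter_mem (j i : ℕ) (hi : 1 ≤ i) (a : Fin j) :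
    ((Finset.powersetCard i (univ : Finset (Fin j))).filter (fun S => a ∈ S)).card
      = (j-1).choose (i-1) := by
  have hcard : (univ.erase a).card = j - 1 := by
    rw [Finset.card_erase_of_mem (mem_univ a), Finset.card_univ, Fintype.card_fin]
  rw [← hcard, ← Finset.card_powersetCard]
  refine Finset.card_bij (fun S _ => Finset.erase S a) ?_ ?_ ?_
  · intro S hS
    simp only [Finset.mem_filter, Finset.mem_powersetCard] at hS
    simp only [Finset.mem_powersetCard]
    exact ⟨fun x hx => Finset.mem_erase.2 ⟨(Finset.mem_erase.1 hx).1,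
        Finset.mem_univ x⟩,
      by rw [Finset.card_erase_of_mem hS.2, hS.1.2]⟩
  · intro S hS S' hS' h
    simp only [Finset.mem_filter] at hS hS'
    rw [← Finset.insert_erase hS.2, h, Finset.insert_erase hS'.2]
  · intro T hT
    simp only [Finset.mem_powersetCard] at hT
    have haT : a ∉ T := fun h => (Finset.mem_erase.1 (hT.1 h)).1 rfl
    refine ⟨insert a T, ?_, ?_⟩
    · simp only [Finset.mem_filter, Finset.mem_powersetCard]
      exact ⟨⟨fun x _ => mem_univ x, by rw [Finset.card_insert_of_notMem haT, hT.2]; omega⟩,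
        Finset.mem_insert_self a T⟩
    · rw [Finset.erase_insert haT]

lemma mac_prod_powersetCard (j i : ℕ) (hi : 1 ≤ i) (f : Fin j → ℝ) :
    ∏ S ∈ Finset.powersetCard i (univ : Finset (Fin j)), ∏ m ∈ S, f m
      = ∏ m, f m ^ ((j-1).choose (i-1)) := by
  calc ∏ S ∈ Finset.powersetCard i (univ : Finset (Fin j)), ∏ m ∈ S, f m
      = ∏ S ∈ Finset.powersetCard i (univ : Finset (Fin j)), ∏ m,
          (if m ∈ S then f m else 1) := by
        refine Finset.prod_congr rfl fun S _ => ?_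
        rw [Finset.prod_ite_mem, Finset.univ_inter]
    _ = ∏ m, ∏ S ∈ Finset.powersetCard i (univ : Finset (Fin j)),
          (if m ∈ S then f m else 1) := Finset.prod_comm
    _ = ∏ m, f m ^ ((j-1).choose (i-1)) := by
        refine Finset.prod_congr rfl fun m _ => ?_
        rw [← Finset.prod_filter, Finset.prod_const, mac_card_filter_mem j i hi m]

lemma mac_amgm (j i : ℕ) (hi : 1 ≤ i) (hij : i ≤ j) (f : Fin j → ℝ) (h0 : ∀ m, 0 ≤ f m) :
    (∏ m, f m) ^ ((i:ℝ)/(j:ℝ)) ≤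
      (∑ S ∈ Finset.powersetCard i (univ : Finset (Fin j)), ∏ m ∈ S, f m) / (j.choose i : ℝ) := by
  have hj : 0 < j := by omega
  set P := Finset.powersetCard i (univ : Finset (Fin j)) with hPdef
  have hN : P.card = j.choose i := by
    rw [hPdef, Finset.card_powersetCard, Finset.card_univ, Fintype.card_fin]
  have hNpos : 0 < j.choose i := Nat.choose_pos hij
  have hNR : (0:ℝ) < (j.choose i : ℝ) := by exact_mod_cast hNpos
  have hz : ∀ S ∈ P, (0:ℝ) ≤ ∏ m ∈ S, f m := fun S _ => Finset.prod_nonneg fun m _ => h0 m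
  have hkey := Real.geom_mean_le_arith_mean_weighted P (fun _ => ((j.choose i : ℝ))⁻¹)
    (fun S => ∏ m ∈ S, f m) (fun _ _ => by positivity)
    (by rw [Finset.sum_const, hN, nsmul_eq_mul]; field_simp) hz
  -- LHS of hkey equals our LHS
  have hc : j * ((j-1).choose (i-1)) = j.choose i * i := by
    have h := Nat.add_one_mul_choose_eq (j-1) (i-1)
    have h1 : i - 1 + 1 = i := by omega
    have h2 : j - 1 + 1 = j := by omega
    simp only [Nat.succ_eq_add_one, h1, h2] at h
    exact h
  have hprod0 : (0:ℝ) ≤ ∏ m, f m := Finset.prod_nonneg fun m _ => h0 m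
  have hL : ∏ S ∈ P, (∏ m ∈ S, f m) ^ ((j.choose i : ℝ))⁻¹
      = (∏ m, f m) ^ ((i:ℝ)/(j:ℝ)) := by
    rw [Real.finset_prod_rpow P _ hz, mac_prod_powersetCard j i hi, Finset.prod_pow,
      ← Real.rpow_natCast (∏ m, f m) ((j-1).choose (i-1)), ← Real.rpow_mul hprod0]
    congr 1
    have hcR : (j:ℝ) * ((j-1).choose (i-1) : ℝ) = (j.choose i : ℝ) * i := by exact_mod_cast hc
    have hjR : (0:ℝ) < (j:ℝ) := by exact_mod_cast hj
    field_simp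
    linarith [hcR]
  calc (∏ m, f m) ^ ((i:ℝ)/(j:ℝ))
      = ∏ S ∈ P, (∏ m ∈ S, f m) ^ ((j.choose i : ℝ))⁻¹ := hL.symm
    _ ≤ ∑ S ∈ P, ((j.choose i : ℝ))⁻¹ * ∏ m ∈ S, f m := hkey
    _ = (∑ S ∈ P, ∏ m ∈ S, f m) / (j.choose i : ℝ) := by
        rw [← Finset.mul_sum, inv_mul_eq_div]

theorem stmt_3 (n : ℕ) (lam : Fin n → ℝ) (hnonneg : ∀ i, 0 ≤ lam i)
    (i j : ℕ) (hi : 1 ≤ i) (hij : i < j) (hj : j ≤ n) :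
    (esymm n j lam / (n.choose j : ℝ)) ^ (1 / (j : ℝ)) ≤
      (esymm n i lam / (n.choose i : ℝ)) ^ (1 / (i : ℝ)) := by
  classical
  set M : Multiset ℝ := Multiset.map lam Finset.univ.val with hM
  have hMcard : Multiset.card M = n := by
    rw [hM, Multiset.card_map]; simp
  have hM0 : ∀ x ∈ M, 0 ≤ x := by
    intro x hx; obtain ⟨m, _, rfl⟩ := Multiset.mem_map.1 hx; exact hnonneg m
  have hMe : ∀ k, esymm n k lam = M.esymm k := fun k =>
    (Finset.esymm_map_val lam Finset.univ k).symm
  obtain ⟨t, ht0, htc, hte⟩ := mac_reduce (n - j) M j hM0 (by omega)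
  rw [hMcard] at hte
  obtain ⟨g, hg⟩ := mac_exists_fn t j htc
  have hg0 : ∀ m, 0 ≤ g m := fun m =>
    ht0 _ (hg ▸ Multiset.mem_map_of_mem g (Finset.mem_val.mpr (Finset.mem_univ m)))
  have hge : ∀ k, t.esymm k = esymm j k g := fun k => by
    rw [← hg]; exact Finset.esymm_map_val g Finset.univ k
  have hchj : (0:ℝ) < (n.choose j : ℝ) := by exact_mod_cast Nat.choose_pos hj
  have hchi : (0:ℝ) < (n.choose i : ℝ) := by exact_mod_cast Nat.choose_pos (by omega : i ≤ n)
  have hchji : (0:ℝ) < (j.choose i : ℝ) := by exact_mod_cast Nat.choose_pos (le_of_lt hij)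
  have hA0 : (0:ℝ) ≤ ∏ m, g m := Finset.prod_nonneg fun m _ => hg0 m
  have hjj : esymm j j g = ∏ m, g m := by
    unfold esymm
    have hps : Finset.powersetCard j (Finset.univ : Finset (Fin j)) = {Finset.univ} := by
      have h := Finset.powersetCard_self (Finset.univ : Finset (Fin j))
      rwa [Finset.card_univ, Fintype.card_fin] at h
    rw [hps, Finset.sum_singleton]
  have hAe : esymm n j lam / (n.choose j : ℝ) = ∏ m, g m := by
    have h := hte j le_rfl
    rw [Nat.choose_self, hge, hjj] at h
    rw [hMe, div_eq_iff hchj.ne']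
    push_cast at h
    linarith [h]
  have hBe : esymm n i lam / (n.choose i : ℝ) = esymm j i g / (j.choose i : ℝ) := by
    have h := hte i (le_of_lt hij)
    rw [hge] at h
    rw [hMe, div_eq_div_iff hchi.ne' hchji.ne']
    linarith [h]
  rw [hAe, hBe]
  have hAM := mac_amgm j i hi (le_of_lt hij) g hg0
  have h1 : (∏ m, g m) ^ ((1:ℝ)/(j:ℝ))
      = ((∏ m, g m) ^ ((i:ℝ)/(j:ℝ))) ^ ((1:ℝ)/(i:ℝ)) := by
    rw [← Real.rpow_mul hA0]
    congr 1
    have hiR : (i:ℝ) ≠ 0 := Nat.cast_ne_zero.2 (by omega)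
    have hjR : (j:ℝ) ≠ 0 := Nat.cast_ne_zero.2 (by omega)
    field_simp
  rw [h1]
  exact Real.rpow_le_rpow (Real.rpow_nonneg hA0 _) hAM (by positivity)
end

section
/- If $e_k(\lambda) = \binom{n}{k}$ for nonnegative reals $\lambda_1,\ldots,\lambda_n$ (where $e_k$ is the $k$-th elementary symmetric polynomial and $1 \le k \le n-1$), then $\left(\sum_i \lambda_i\right) e_k(\lambda) - (k+1) e_{k+1}(\lambda) - k\, e_k(\lambda) \ge 0$, i.e. $n\binom{n}{k} - (k+1)e_{k+1}(\lambda) - k\binom{n}{k} \ge 0$, with equality if and only if all $\lambda_i = 1$. -/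
open Finset

/-- The combinatorial identity
`e₁ · e_k = (k+1) e_{k+1} + ∑_{|t|=k} (∑_{i∈t} λᵢ) ∏_{i∈t} λᵢ`. -/
lemma esymm_identity (n k : ℕ) (lam : Fin n → ℝ) :
    (∑ i, lam i) * esymm n k lam =
      ((k : ℝ) + 1) * esymm n (k + 1) lam +
        ∑ t ∈ powersetCard k (univ : Finset (Fin n)),
          (∑ i ∈ t, lam i) * ∏ i ∈ t, lam i := by
  classical
  unfold esymm
  have key : ∑ t ∈ powersetCard k (univ : Finset (Fin n)), ∑ i ∈ tᶜ, lam i * ∏ j ∈ t, lam j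
      = ∑ s ∈ powersetCard (k + 1) (univ : Finset (Fin n)), ∑ _i ∈ s, ∏ j ∈ s, lam j := by
    rw [Finset.sum_sigma', Finset.sum_sigma']
    refine Finset.sum_nbij' (fun p => ⟨insert p.2 p.1, p.2⟩) (fun p => ⟨p.1.erase p.2, p.2⟩)
      ?_ ?_ ?_ ?_ ?_
    · rintro ⟨t, i⟩ hp
      simp only [Finset.mem_sigma, Finset.mem_powersetCard_univ, Finset.mem_compl] at hp ⊢
      exact ⟨by rw [Finset.card_insert_of_notMem hp.2, hp.1], Finset.mem_insert_self _ _⟩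
    · rintro ⟨s, i⟩ hp
      simp only [Finset.mem_sigma, Finset.mem_powersetCard_univ, Finset.mem_compl] at hp ⊢
      exact ⟨by rw [Finset.card_erase_of_mem hp.2, hp.1]; omega, Finset.notMem_erase _ _⟩
    · rintro ⟨t, i⟩ hp
      simp only [Finset.mem_sigma, Finset.mem_powersetCard_univ, Finset.mem_compl] at hp
      simp [Finset.erase_insert hp.2]
    · rintro ⟨s, i⟩ hp
      simp only [Finset.mem_sigma, Finset.mem_powersetCard_univ] at hp
      simp [Finset.insert_erase hp.2]
    · rintro ⟨t, i⟩ hp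
      simp only [Finset.mem_sigma, Finset.mem_powersetCard_univ, Finset.mem_compl] at hp
      simp [Finset.prod_insert hp.2]
  have hconst : ∀ s ∈ powersetCard (k + 1) (univ : Finset (Fin n)),
      (∑ _i ∈ s, ∏ j ∈ s, lam j) = ((k : ℝ) + 1) * ∏ j ∈ s, lam j := by
    intro s hs
    rw [Finset.mem_powersetCard_univ] at hs
    rw [Finset.sum_const, hs, nsmul_eq_mul]
    push_cast
    ring
  calc (∑ i, lam i) * ∑ t ∈ powersetCard k (univ : Finset (Fin n)), ∏ j ∈ t, lam j
      = ∑ t ∈ powersetCard k (univ : Finset (Fin n)), ∑ i, lam i * ∏ j ∈ t, lam j := by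
        rw [Finset.mul_sum]
        exact Finset.sum_congr rfl fun t _ => Finset.sum_mul _ _ _
    _ = ∑ t ∈ powersetCard k (univ : Finset (Fin n)),
          ((∑ i ∈ t, lam i * ∏ j ∈ t, lam j) + ∑ i ∈ tᶜ, lam i * ∏ j ∈ t, lam j) := by
        refine Finset.sum_congr rfl fun t _ => ?_
        rw [Finset.sum_add_sum_compl]
    _ = (∑ t ∈ powersetCard k (univ : Finset (Fin n)), (∑ i ∈ t, lam i) * ∏ j ∈ t, lam j)
          + ∑ t ∈ powersetCard k (univ : Finset (Fin n)), ∑ i ∈ tᶜ, lam i * ∏ j ∈ t, lam j := by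
        rw [Finset.sum_add_distrib]
        congr 1
        exact Finset.sum_congr rfl fun t _ => (Finset.sum_mul _ _ _).symm
    _ = ((k : ℝ) + 1) * (∑ s ∈ powersetCard (k + 1) (univ : Finset (Fin n)), ∏ j ∈ s, lam j)
          + ∑ t ∈ powersetCard k (univ : Finset (Fin n)), (∑ i ∈ t, lam i) * ∏ j ∈ t, lam j := by
        rw [key, Finset.sum_congr rfl hconst, ← Finset.mul_sum]
        ring

theorem stmt_4 (n k : ℕ) (hk : 1 ≤ k) (hkn : k ≤ n - 1)
    (lam : Fin n → ℝ) (hnonneg : ∀ i, 0 ≤ lam i)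
    (hek : esymm n k lam = (n.choose k : ℝ)) :
    0 ≤ (∑ i, lam i) * esymm n k lam - (k + 1) * esymm n (k + 1) lam - k * esymm n k lam ∧
    ((∑ i, lam i) * esymm n k lam - (k + 1) * esymm n (k + 1) lam - k * esymm n k lam = 0 ↔
      ∀ i, lam i = 1) := by
  classical
  have hkn' : k + 1 ≤ n := by omega
  have hk0 : (0 : ℝ) < (k : ℝ) := by exact_mod_cast hk
  set T := powersetCard k (univ : Finset (Fin n)) with hT
  set p : ℝ := ((k : ℝ) + 1) / k with hpdef
  have hp1 : 1 < p := by
    rw [hpdef, lt_div_iff₀ hk0]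
    linarith
  have hpinv : p = (k : ℝ)⁻¹ + 1 := by
    field_simp [hpdef]
    rw [hpdef, div_mul_cancel₀ _ hk0.ne']; ring
  have hTcard : (T.card : ℝ) = (n.choose k : ℝ) := by
    rw [hT, Finset.card_powersetCard, Finset.card_univ, Fintype.card_fin]
  have hsumf : ∑ t ∈ T, ∏ i ∈ t, lam i = (n.choose k : ℝ) := hek
  have hfnn : ∀ t : Finset (Fin n), 0 ≤ ∏ i ∈ t, lam i := fun t =>
    Finset.prod_nonneg fun i _ => hnonneg i
  -- AM-GM pointwise
  have amgm : ∀ t ∈ T, (k : ℝ) * (∏ i ∈ t, lam i) ^ p ≤ (∑ i ∈ t, lam i) * ∏ i ∈ t, lam i := by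
    intro t ht
    rw [hT, Finset.mem_powersetCard_univ] at ht
    rcases eq_or_lt_of_le (hfnn t) with hP0 | hPpos
    · rw [← hP0, Real.zero_rpow (by positivity), mul_zero, mul_zero]
    · have hgm := Real.geom_mean_le_arith_mean_weighted t (fun _ => (k : ℝ)⁻¹) lam
        (fun i _ => by positivity)
        (by rw [Finset.sum_const, ht, nsmul_eq_mul]; field_simp)
        (fun i _ => hnonneg i)
      rw [Real.finset_prod_rpow t lam (fun i _ => hnonneg i)] at hgm
      have hgm2 : (k : ℝ) * (∏ i ∈ t, lam i) ^ ((k : ℝ)⁻¹) ≤ ∑ i ∈ t, lam i := by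
        have : ∑ i ∈ t, (k : ℝ)⁻¹ * lam i = (k : ℝ)⁻¹ * ∑ i ∈ t, lam i := by
          rw [Finset.mul_sum]
        rw [this] at hgm
        rw [mul_comm]
        rw [← le_div_iff₀ hk0, div_eq_inv_mul]
        exact hgm
      have hsplit : (∏ i ∈ t, lam i) ^ p = (∏ i ∈ t, lam i) ^ ((k : ℝ)⁻¹) * ∏ i ∈ t, lam i := by
        rw [hpinv, Real.rpow_add hPpos, Real.rpow_one]
      rw [hsplit, ← mul_assoc]
      exact mul_le_mul_of_nonneg_right hgm2 (hfnn t)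
  -- Bernoulli / tangent line
  have bern : ∀ x : ℝ, 0 ≤ x → x + (p - 1) * (x - 1) ≤ x ^ p := by
    intro x hx
    have h := one_add_mul_self_le_rpow_one_add (s := x - 1) (by linarith) hp1.le
    have hx1 : 1 + (x - 1) = x := by ring
    rw [hx1] at h
    linarith
  have hsum_lin : ∑ t ∈ T, ((∏ i ∈ t, lam i) + (p - 1) * ((∏ i ∈ t, lam i) - 1))
      = (n.choose k : ℝ) := by
    rw [Finset.sum_add_distrib, ← Finset.mul_sum, Finset.sum_sub_distrib, Finset.sum_const,
      hsumf, nsmul_eq_mul, mul_one, hTcard]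
    ring
  have hjensen : (k : ℝ) * (n.choose k : ℝ) ≤ ∑ t ∈ T, (k : ℝ) * (∏ i ∈ t, lam i) ^ p := by
    rw [← Finset.mul_sum]
    have h1 : (n.choose k : ℝ) ≤ ∑ t ∈ T, (∏ i ∈ t, lam i) ^ p := by
      rw [← hsum_lin]
      exact Finset.sum_le_sum fun t _ => bern _ (hfnn t)
    exact mul_le_mul_of_nonneg_left h1 hk0.le
  have hmid : ∑ t ∈ T, (k : ℝ) * (∏ i ∈ t, lam i) ^ p
      ≤ ∑ t ∈ T, (∑ i ∈ t, lam i) * ∏ i ∈ t, lam i :=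
    Finset.sum_le_sum amgm
  have htarget : (∑ i, lam i) * esymm n k lam - (k + 1) * esymm n (k + 1) lam
      - k * esymm n k lam
      = (∑ t ∈ T, (∑ i ∈ t, lam i) * ∏ i ∈ t, lam i) - (k : ℝ) * (n.choose k : ℝ) := by
    rw [esymm_identity n k lam, hek]
    ring
  constructor
  · rw [htarget]
    linarith
  constructor
  · -- equality implies all lam = 1
    intro h0
    rw [htarget] at h0
    have hAeq : ∑ t ∈ T, (∑ i ∈ t, lam i) * ∏ i ∈ t, lam i = (k : ℝ) * (n.choose k : ℝ) := by
      linarith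
    have hsum_p : ∑ t ∈ T, (∏ i ∈ t, lam i) ^ p = (n.choose k : ℝ) := by
      have h1 : (n.choose k : ℝ) ≤ ∑ t ∈ T, (∏ i ∈ t, lam i) ^ p := by
        rw [← hsum_lin]
        exact Finset.sum_le_sum fun t _ => bern _ (hfnn t)
      have h2 : (k : ℝ) * ∑ t ∈ T, (∏ i ∈ t, lam i) ^ p ≤ (k : ℝ) * (n.choose k : ℝ) := by
        rw [Finset.mul_sum]
        rw [← hAeq] at *
        linarith [hmid]
      nlinarith
    have hall1 : ∀ t ∈ T, ∏ i ∈ t, lam i = 1 := by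
      have hzero : ∑ t ∈ T, ((∏ i ∈ t, lam i) ^ p
          - ((∏ i ∈ t, lam i) + (p - 1) * ((∏ i ∈ t, lam i) - 1))) = 0 := by
        rw [Finset.sum_sub_distrib, hsum_p, hsum_lin]
        ring
      have heach := (Finset.sum_eq_zero_iff_of_nonneg
        (fun t _ => sub_nonneg.mpr (bern _ (hfnn t)))).mp hzero
      intro t ht
      have ht0 := heach t ht
      by_contra hne
      have hs : (∏ i ∈ t, lam i) - 1 ≠ 0 := sub_ne_zero.mpr hne
      have := one_add_mul_self_lt_rpow_one_add (s := (∏ i ∈ t, lam i) - 1)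
        (by linarith [hfnn t]) hs hp1
      have hx1 : 1 + ((∏ i ∈ t, lam i) - 1) = ∏ i ∈ t, lam i := by ring
      rw [hx1] at this
      have : (∏ i ∈ t, lam i) + (p - 1) * ((∏ i ∈ t, lam i) - 1) < (∏ i ∈ t, lam i) ^ p := by
        linarith
      linarith
    -- now every k-subset has product 1
    have hpos : ∀ i, 0 < lam i := by
      intro i
      obtain ⟨t, hit, -, htc⟩ := Finset.exists_subsuperset_card_eq
        (Finset.subset_univ {i}) (by simpa using hk) (by simp [Finset.card_univ]; omega)
      have ht : t ∈ T := by rw [hT, Finset.mem_powersetCard_univ]; exact htc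
      have h1 : ∏ j ∈ t, lam j = 1 := hall1 t ht
      have hne : lam i ≠ 0 := by
        intro h
        have hz := Finset.prod_eq_zero (Finset.singleton_subset_iff.mp hit) h
        rw [h1] at hz
        norm_num at hz
      exact lt_of_le_of_ne (hnonneg i) (Ne.symm hne)
    have hequal : ∀ i j : Fin n, lam i = lam j := by
      intro i j
      rcases eq_or_ne i j with rfl | hij
      · rfl
      obtain ⟨t, hit, htsub, htc⟩ := Finset.exists_subsuperset_card_eq
        (t := Finset.univ.erase j) (s := {i})
        (Finset.singleton_subset_iff.mpr (Finset.mem_erase.mpr ⟨hij, Finset.mem_univ i⟩))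
        (by simpa using hk)
        (by rw [Finset.card_erase_of_mem (Finset.mem_univ j), Finset.card_univ,
              Fintype.card_fin]; omega)
      have hit' : i ∈ t := Finset.singleton_subset_iff.mp hit
      have hjt : j ∉ t := fun hj => Finset.notMem_erase j _ (htsub hj)
      have ht : t ∈ T := by rw [hT, Finset.mem_powersetCard_univ]; exact htc
      have ht2 : insert j (t.erase i) ∈ T := by
        rw [hT, Finset.mem_powersetCard_univ, Finset.card_insert_of_notMem
          (fun h => hjt (Finset.mem_of_mem_erase h)), Finset.card_erase_of_mem hit', htc]
        omega
      have h1 : lam i * ∏ x ∈ t.erase i, lam x = 1 := by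
        rw [Finset.mul_prod_erase t lam hit']
        exact hall1 t ht
      have h2 : lam j * ∏ x ∈ t.erase i, lam x = 1 := by
        rw [← Finset.prod_insert (fun h => hjt (Finset.mem_of_mem_erase h))]
        exact hall1 _ ht2
      have hPne : ∏ x ∈ t.erase i, lam x ≠ 0 :=
        Finset.prod_ne_zero_iff.mpr fun x _ => (hpos x).ne'
      exact mul_right_cancel₀ hPne (h1.trans h2.symm)
    intro i
    obtain ⟨t, hit, -, htc⟩ := Finset.exists_subsuperset_card_eq
      (Finset.subset_univ {i}) (by simpa using hk) (by simp [Finset.card_univ]; omega)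
    have ht : t ∈ T := by rw [hT, Finset.mem_powersetCard_univ]; exact htc
    have h1 : lam i ^ k = 1 := by
      have : ∏ j ∈ t, lam j = ∏ _j ∈ t, lam i :=
        Finset.prod_congr rfl fun j _ => (hequal j i)
      rw [Finset.prod_const, htc] at this
      rw [← this]
      exact hall1 t ht
    have hkne : k ≠ 0 := Nat.one_le_iff_ne_zero.mp hk
    rcases lt_trichotomy (lam i) 1 with h | h | h
    · exfalso
      have hlt : lam i ^ k < 1 := by
        first
        | exact pow_lt_one₀ (hnonneg i) h hkne
        | exact pow_lt_one (hnonneg i) h hkne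
      rw [h1] at hlt; norm_num at hlt
    · exact h
    · exfalso
      have hlt : 1 < lam i ^ k := by
        first
        | exact one_lt_pow₀ h hkne
        | exact one_lt_pow h hkne
      rw [h1] at hlt; norm_num at hlt
  · -- all lam = 1 implies equality
    intro hl
    have h1 : ∑ i, lam i = (n : ℝ) := by
      simp [hl]
    have h2 : esymm n (k + 1) lam = (n.choose (k + 1) : ℝ) := by
      unfold esymm
      simp [hl, Finset.card_powersetCard]
    have hcR : (n.choose (k + 1) : ℝ) * ((k : ℝ) + 1) = (n.choose k : ℝ) * ((n : ℝ) - k) := by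
      have hc := Nat.choose_succ_right_eq n k
      have := congrArg (Nat.cast : ℕ → ℝ) hc
      push_cast at this
      rwa [Nat.cast_sub (by omega : k ≤ n)] at this
    rw [h1, h2, hek]
    push_cast
    nlinarith [hcR]
end
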